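/- Let λ > 0, s̃ ≥ 1 an integer with ρ₋(A, s̄+2s̃) > 0, and M ≥ ρ₋(A, s̄+2s̃). Suppose x ∈ ℝⁿ satisfies ‖x_{S̄ᶜ}‖₀ ≤ s̃ and T = T_{λ,M}(x) satisfies ‖T_{S̄ᶜ}‖₀ ≤ s̃. Then ω_λ(T) ≤ (1 + κ) · ‖g_{λ,M}(x)‖₂, where κ = ρ₊(A, s̄+2s̃)/ρ₋(A, s̄+2s̃). -/

import Mathlib

open scoped BigOperators
open Matrix

noncomputable section

namespace PGH

/-- Euclidean dot product on `Fin n → ℝ`. -/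
def dot {n : ℕ} (x y : Fin n → ℝ) : ℝ := ∑ i, x i * y i

/-- Squared Euclidean norm. -/
def sqnorm {n : ℕ} (x : Fin n → ℝ) : ℝ := ∑ i, (x i) ^ 2

/-- Euclidean (ℓ₂) norm. -/
noncomputable def l2 {n : ℕ} (x : Fin n → ℝ) : ℝ := Real.sqrt (sqnorm x)

/-- ℓ₁ norm. -/
def l1 {n : ℕ} (x : Fin n → ℝ) : ℝ := ∑ i, |x i|

/-- ℓ∞ norm (maximum absolute coordinate). -/
noncomputable def linf {n : ℕ} (x : Fin n → ℝ) : ℝ := ⨆ i, |x i|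

/-- Support of a vector. -/
def supp {n : ℕ} (x : Fin n → ℝ) : Finset (Fin n) := Finset.univ.filter (fun i => x i ≠ 0)

/-- Number of nonzero coordinates. -/
def l0 {n : ℕ} (x : Fin n → ℝ) : ℕ := (supp x).card

/-- Number of nonzero coordinates within the index set `S`
(i.e. `‖x_S‖₀` for the restriction of `x` to `S`). -/
def l0on {n : ℕ} (S : Finset (Fin n)) (x : Fin n → ℝ) : ℕ :=
  (S.filter (fun i => x i ≠ 0)).card

/-- ℓ₁ norm of the restriction of `x` to the index set `S`. -/
def l1on {n : ℕ} (S : Finset (Fin n)) (x : Fin n → ℝ) : ℝ := ∑ i ∈ S, |x i|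

/-- Gradient of `f(x) = (1/2)‖Ax - b‖₂²`, namely `Aᵀ(Ax - b)`. -/
def grad {m n : ℕ} (A : Matrix (Fin m) (Fin n) ℝ) (b : Fin m → ℝ) (x : Fin n → ℝ) :
    Fin n → ℝ :=
  Aᵀ.mulVec (A.mulVec x - b)

/-- Least-squares objective `f(x) = (1/2)‖Ax - b‖₂²`. -/
def fls {m n : ℕ} (A : Matrix (Fin m) (Fin n) ℝ) (b : Fin m → ℝ) (x : Fin n → ℝ) : ℝ :=
  sqnorm (A.mulVec x - b) / 2

/-- ℓ₁-regularized least-squares objective `φ_λ(x) = f(x) + λ‖x‖₁`. -/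
def phi {m n : ℕ} (A : Matrix (Fin m) (Fin n) ℝ) (b : Fin m → ℝ) (lam : ℝ)
    (x : Fin n → ℝ) : ℝ :=
  fls A b x + lam * l1 x

/-- Restricted maximal eigenvalue `ρ₊(A, s)`. -/
noncomputable def rhoPlus {m n : ℕ} (A : Matrix (Fin m) (Fin n) ℝ) (s : ℕ) : ℝ :=
  sSup {r | ∃ x : Fin n → ℝ, x ≠ 0 ∧ l0 x ≤ s ∧ r = sqnorm (A.mulVec x) / sqnorm x}

/-- Restricted minimal eigenvalue `ρ₋(A, s)`. -/
noncomputable def rhoMinus {m n : ℕ} (A : Matrix (Fin m) (Fin n) ℝ) (s : ℕ) : ℝ :=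
  sInf {r | ∃ x : Fin n → ℝ, x ≠ 0 ∧ l0 x ≤ s ∧ r = sqnorm (A.mulVec x) / sqnorm x}

/-- `ξ` is a subgradient of the ℓ₁ norm at `x`. -/
def IsSubgrad {n : ℕ} (x ξ : Fin n → ℝ) : Prop :=
  ∀ i, (x i ≠ 0 → ξ i = Real.sign (x i)) ∧ (x i = 0 → |ξ i| ≤ 1)

/-- Optimality residue `ω_λ(x) = min_{ξ ∈ ∂‖x‖₁} ‖Aᵀ(Ax−b) + λξ‖_∞`. -/
noncomputable def omega {m n : ℕ} (A : Matrix (Fin m) (Fin n) ℝ) (b : Fin m → ℝ)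
    (lam : ℝ) (x : Fin n → ℝ) : ℝ :=
  sInf {r | ∃ ξ : Fin n → ℝ, IsSubgrad x ξ ∧
    r = linf (fun i => grad A b x i + lam * ξ i)}

/-- The local model `ψ_{λ,L}(y; x)`. -/
def psi {m n : ℕ} (A : Matrix (Fin m) (Fin n) ℝ) (b : Fin m → ℝ) (lam L : ℝ)
    (y x : Fin n → ℝ) : ℝ :=
  fls A b y + dot (grad A b y) (x - y) + L / 2 * sqnorm (x - y) + lam * l1 x

/-- The noise-domination condition
`λ ≥ max{4, (γ+1)/((1−δ')γ−(1+δ'))} ⬝ ‖Aᵀz‖_∞`. -/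
def noiseCond {m n : ℕ} (A : Matrix (Fin m) (Fin n) ℝ) (z : Fin m → ℝ)
    (dp gam lam : ℝ) : Prop :=
  lam ≥ max 4 ((gam + 1) / ((1 - dp) * gam - (1 + dp))) * linf (Aᵀ.mulVec z)

/-!
The proximal step `T` minimizes a model that separates over coordinates; in each coordinate it is
the one-dimensional problem `L/2 t² + c t + λ|t|`, whose optimality conditions say exactly that
`ξ = (M (x - T) - ∇f(x)) / λ` is a subgradient of `‖·‖₁` at `T`. For this `ξ` the residue is
`∇f(T) + λξ = M(x - T) - AᵀA(x - T)`. Off `S̄` both `x` and `T` have at most `s̃` nonzeros, so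
`x - T` is `(s̄ + 2s̃)`-sparse, and Cauchy–Schwarz against a column of `A` bounds each coordinate
of `AᵀA(x - T)` by `ρ₊ ‖x - T‖₂ ≤ (ρ₊/ρ₋) ‖M(x - T)‖₂`.
-/

variable {m n : ℕ}

lemma sqnorm_nonneg (x : Fin n → ℝ) : 0 ≤ sqnorm x :=
  Finset.sum_nonneg fun _ _ => sq_nonneg _

lemma sqnorm_pos {x : Fin n → ℝ} (hx : x ≠ 0) : 0 < sqnorm x := by
  obtain ⟨i, hi⟩ := Function.ne_iff.mp hx
  exact (pow_pos (abs_pos.mpr hi) 2).trans_le <| (sq_abs (x i)).symm ▸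
    Finset.single_le_sum (f := fun j => x j ^ 2) (fun _ _ => sq_nonneg _) (Finset.mem_univ i)

lemma abs_le_l2 (x : Fin n → ℝ) (i : Fin n) : |x i| ≤ l2 x :=
  Real.abs_le_sqrt <|
    Finset.single_le_sum (f := fun j => x j ^ 2) (fun _ _ => sq_nonneg _) (Finset.mem_univ i)

lemma l2_const_mul (c : ℝ) (x : Fin n → ℝ) : l2 (fun i => c * x i) = |c| * l2 x := by
  have h : sqnorm (fun i => c * x i) = c ^ 2 * sqnorm x := by
    simp only [sqnorm, Finset.mul_sum, mul_pow]
  rw [l2, l2, h, Real.sqrt_mul (sq_nonneg c), Real.sqrt_sq_eq_abs]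

lemma l0_sub_le (x y : Fin n → ℝ) (S : Finset (Fin n)) :
    l0 (x - y) ≤ S.card + l0on Sᶜ x + l0on Sᶜ y := by
  unfold l0 l0on
  set X := Sᶜ.filter (fun i => x i ≠ 0)
  set Y := Sᶜ.filter (fun i => y i ≠ 0)
  have hsupp : supp (x - y) ⊆ S ∪ (X ∪ Y) := by
    intro i hi
    by_cases hiS : i ∈ S
    · exact Finset.mem_union_left _ hiS
    · have hxy : x i - y i ≠ 0 := (Finset.mem_filter.mp hi).2
      refine Finset.mem_union_right _ ?_
      by_cases hxi : x i = 0
      · exact Finset.mem_union_right _ <|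
          Finset.mem_filter.mpr ⟨Finset.mem_compl.mpr hiS, by simpa [hxi] using hxy⟩
      · exact Finset.mem_union_left _ <| Finset.mem_filter.mpr ⟨Finset.mem_compl.mpr hiS, hxi⟩
  have h₁ := Finset.card_union_le S (X ∪ Y)
  have h₂ := Finset.card_union_le X Y
  have h₃ := Finset.card_le_card hsupp
  omega

section RestrictedEigenvalues

variable (A : Matrix (Fin m) (Fin n) ℝ) (s : ℕ)

def rayleighQuotients : Set ℝ :=
  {r | ∃ x : Fin n → ℝ, x ≠ 0 ∧ l0 x ≤ s ∧ r = sqnorm (A.mulVec x) / sqnorm x}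

lemma rayleighQuotients_bddAbove : BddAbove (rayleighQuotients A s) := by
  refine ⟨∑ i, sqnorm (A i), ?_⟩
  rintro r ⟨x, hx, -, rfl⟩
  rw [div_le_iff₀ (sqnorm_pos hx), Finset.sum_mul]
  refine Finset.sum_le_sum fun i _ => ?_
  simpa [Matrix.mulVec, dotProduct, sqnorm] using
    Finset.sum_mul_sq_le_sq_mul_sq Finset.univ (A i) x

lemma rayleighQuotients_bddBelow : BddBelow (rayleighQuotients A s) := by
  refine ⟨0, ?_⟩
  rintro r ⟨x, -, -, rfl⟩
  exact div_nonneg (sqnorm_nonneg _) (sqnorm_nonneg _)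

variable {A s}

lemma rayleighQuotients_nonempty_of_rhoMinus_pos (h : 0 < rhoMinus A s) :
    (rayleighQuotients A s).Nonempty := by
  by_contra hempty
  rw [Set.not_nonempty_iff_eq_empty] at hempty
  rw [rhoMinus, ← rayleighQuotients, hempty, Real.sInf_empty] at h
  exact h.false

lemma one_le_of_rayleighQuotients_nonempty (h : (rayleighQuotients A s).Nonempty) : 1 ≤ s := by
  obtain ⟨_, x, hx, hxs, -⟩ := h
  obtain ⟨i, hi⟩ := Function.ne_iff.mp hx
  exact le_trans (Finset.card_pos.mpr ⟨i, Finset.mem_filter.mpr ⟨Finset.mem_univ i, hi⟩⟩) hxs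

lemma rhoMinus_le_rhoPlus (h : (rayleighQuotients A s).Nonempty) : rhoMinus A s ≤ rhoPlus A s :=
  csInf_le_csSup h (rayleighQuotients_bddBelow A s) (rayleighQuotients_bddAbove A s)

lemma sqnorm_mulVec_le_rhoPlus {x : Fin n → ℝ} (hx : l0 x ≤ s) :
    sqnorm (A.mulVec x) ≤ rhoPlus A s * sqnorm x := by
  rcases eq_or_ne x 0 with rfl | hx0
  · simp [sqnorm]
  · rw [← div_le_iff₀ (sqnorm_pos hx0)]
    exact le_csSup (rayleighQuotients_bddAbove A s) ⟨x, hx0, hx, rfl⟩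

lemma sqnorm_col_le_rhoPlus (hs : 1 ≤ s) (i : Fin n) : sqnorm (A.col i) ≤ rhoPlus A s := by
  have hsingle : l0 (Pi.single i (1 : ℝ)) ≤ s := by
    refine le_trans (Finset.card_le_one.mpr fun _ hj _ hk => ?_) hs
    simp only [supp, Finset.mem_filter, Finset.mem_univ, true_and] at hj hk
    rw [Pi.single_apply] at hj hk
    grind
  have h := sqnorm_mulVec_le_rhoPlus (A := A) hsingle
  have hunit : sqnorm (Pi.single i (1 : ℝ)) = 1 := by simp [sqnorm, Pi.single_apply, ite_pow]
  rwa [Matrix.mulVec_single_one, hunit, mul_one] at h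

lemma abs_transpose_mulVec_mulVec_le_rhoPlus (hs : 1 ≤ s) {u : Fin n → ℝ} (hu : l0 u ≤ s)
    (i : Fin n) : |(Aᵀ.mulVec (A.mulVec u)) i| ≤ rhoPlus A s * l2 u := by
  have hplus : 0 ≤ rhoPlus A s := (sqnorm_nonneg _).trans (sqnorm_col_le_rhoPlus hs i)
  have hcs : (Aᵀ.mulVec (A.mulVec u)) i ^ 2 ≤ sqnorm (A.col i) * sqnorm (A.mulVec u) := by
    simpa [Matrix.mulVec, dotProduct, sqnorm] using
      Finset.sum_mul_sq_le_sq_mul_sq Finset.univ (A.col i) (A.mulVec u)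
  have hsq : (Aᵀ.mulVec (A.mulVec u)) i ^ 2 ≤ (rhoPlus A s * l2 u) ^ 2 := by
    rw [mul_pow, l2, Real.sq_sqrt (sqnorm_nonneg u), sq (rhoPlus A s), mul_assoc]
    exact hcs.trans (mul_le_mul (sqnorm_col_le_rhoPlus hs i) (sqnorm_mulVec_le_rhoPlus hu)
      (sqnorm_nonneg _) hplus)
  exact abs_le_of_sq_le_sq hsq (mul_nonneg hplus (Real.sqrt_nonneg _))

end RestrictedEigenvalues

section ProximalStep

lemma le_apply_of_forall_sum_le {ι β : Type*} [Fintype ι] [DecidableEq ι] [AddCommMonoid β]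
    [PartialOrder β] [IsOrderedCancelAddMonoid β] (F : ι → ℝ → β) {T : ι → ℝ}
    (hT : ∀ u : ι → ℝ, ∑ j, F j (T j) ≤ ∑ j, F j (u j)) (i : ι) (t : ℝ) :
    F i (T i) ≤ F i t := by
  have h := hT (Function.update T i t)
  have hrest : ∑ j ∈ {i}ᶜ, F j (Function.update T i t j) = ∑ j ∈ {i}ᶜ, F j (T j) :=
    Finset.sum_congr rfl fun j hj =>
      by rw [Function.update_of_ne (by simpa using hj)]
  rwa [Fintype.sum_eq_add_sum_compl i, Fintype.sum_eq_add_sum_compl i, hrest,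
    Function.update_self, add_le_add_iff_right] at h

def proxObj (L c lam t : ℝ) : ℝ := L / 2 * t ^ 2 + c * t + lam * |t|

lemma hasDerivAt_proxObj (L c lam : ℝ) {t : ℝ} (ht : t ≠ 0) :
    HasDerivAt (proxObj L c lam) (L * t + c + lam * Real.sign t) t := by
  have hsign : (SignType.sign t : ℝ) = Real.sign t := by
    rcases ht.lt_or_gt with h | h
    · simp [h, Real.sign_of_neg]
    · simp [h, Real.sign_of_pos]
  have h := (((hasDerivAt_pow 2 t).const_mul (L / 2)).add ((hasDerivAt_id t).const_mul c)).add
    ((hasDerivAt_abs ht).const_mul lam)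
  exact h.congr_deriv (by rw [hsign]; push_cast; ring)

lemma proxObj_deriv_eq_zero {L c lam t₀ : ℝ}
    (hmin : ∀ t, proxObj L c lam t₀ ≤ proxObj L c lam t) (ht₀ : t₀ ≠ 0) :
    L * t₀ + c + lam * Real.sign t₀ = 0 :=
  IsLocalMin.hasDerivAt_eq_zero (Filter.Eventually.of_forall hmin)
    (hasDerivAt_proxObj L c lam ht₀)

lemma proxObj_neg (L c lam t : ℝ) : proxObj L (-c) lam t = proxObj L c lam (-t) := by
  simp only [proxObj, neg_sq, abs_neg]
  ring

lemma neg_le_of_proxObj_min_at_zero {L c lam : ℝ} (hL : 0 < L)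
    (hmin : ∀ t, proxObj L c lam 0 ≤ proxObj L c lam t) : -lam ≤ c := by
  refine le_of_forall_pos_le_add fun ε hε => ?_
  set t := 2 * ε / L
  have ht : 0 < t := by positivity
  have hquad : L / 2 * t ^ 2 = ε * t := by
    simp only [t]
    field_simp
  have h := hmin t
  simp only [proxObj, abs_of_pos ht, abs_zero] at h
  have hprod : 0 ≤ t * (ε + c + lam) := by linarith
  linarith [nonneg_of_mul_nonneg_right hprod ht]

lemma abs_le_of_proxObj_min_at_zero {L c lam : ℝ} (hL : 0 < L)
    (hmin : ∀ t, proxObj L c lam 0 ≤ proxObj L c lam t) : |c| ≤ lam := by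
  have hneg : -lam ≤ -c := neg_le_of_proxObj_min_at_zero hL fun t => by
    simpa only [proxObj_neg, neg_zero] using hmin (-t)
  exact abs_le.mpr ⟨neg_le_of_proxObj_min_at_zero hL hmin, by linarith⟩

variable {A : Matrix (Fin m) (Fin n) ℝ} {b : Fin m → ℝ} {lam L : ℝ}

lemma psi_eq_add_sum_proxObj (x u : Fin n → ℝ) :
    psi A b lam L x u = (fls A b x + ∑ j, (L / 2 * x j ^ 2 - grad A b x j * x j)) +
      ∑ j, proxObj L (grad A b x j - L * x j) lam (u j) := by
  have hsplit : psi A b lam L x u = fls A b x +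
      ∑ j, (grad A b x j * (u j - x j) + L / 2 * (u j - x j) ^ 2 + lam * |u j|) := by
    simp only [psi, dot, sqnorm, l1, Pi.sub_apply, Finset.mul_sum, Finset.sum_add_distrib]
    ring
  rw [hsplit, add_assoc, ← Finset.sum_add_distrib]
  exact congrArg _ (Finset.sum_congr rfl fun j _ => by rw [proxObj]; ring)

lemma isSubgrad_of_isMin_psi (hlam : 0 < lam) (hL : 0 < L) {x T : Fin n → ℝ}
    (hT : ∀ u, psi A b lam L x T ≤ psi A b lam L x u) :
    IsSubgrad T (fun i => (L * (x i - T i) - grad A b x i) / lam) := by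
  have hcoord := le_apply_of_forall_sum_le _ fun u => by
    simpa only [psi_eq_add_sum_proxObj, add_le_add_iff_left] using hT u
  intro i
  constructor
  · intro hi
    have h := proxObj_deriv_eq_zero (hcoord i) hi
    rw [div_eq_iff hlam.ne']
    linarith
  · intro hi
    rw [abs_div, abs_of_pos hlam, div_le_one hlam, hi, sub_zero, abs_sub_comm]
    exact abs_le_of_proxObj_min_at_zero hL (hi ▸ hcoord i)

end ProximalStep

lemma omega_le_linf {A : Matrix (Fin m) (Fin n) ℝ} {b : Fin m → ℝ} {lam : ℝ} {x ξ : Fin n → ℝ}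
    (hξ : IsSubgrad x ξ) : omega A b lam x ≤ linf (fun i => grad A b x i + lam * ξ i) :=
  csInf_le ⟨0, fun _ ⟨_, _, hr⟩ => hr ▸ Real.iSup_nonneg fun _ => abs_nonneg _⟩ ⟨ξ, hξ, rfl⟩

lemma grad_sub_grad (A : Matrix (Fin m) (Fin n) ℝ) (b : Fin m → ℝ) (x y : Fin n → ℝ) :
    grad A b x - grad A b y = Aᵀ.mulVec (A.mulVec (x - y)) := by
  simp only [grad, Matrix.mulVec_sub]
  abel

theorem stmt12_general {m n : ℕ} (A : Matrix (Fin m) (Fin n) ℝ) (b : Fin m → ℝ)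
    (S : Finset (Fin n)) (lam : ℝ) (hlam : 0 < lam) (st : ℕ)
    (hrho : 0 < rhoMinus A (S.card + 2 * st))
    (M : ℝ) (hM : rhoMinus A (S.card + 2 * st) ≤ M)
    (x : Fin n → ℝ) (hxsp : l0on Sᶜ x ≤ st)
    (T : Fin n → ℝ) (hT : ∀ u, psi A b lam M x T ≤ psi A b lam M x u)
    (hTsp : l0on Sᶜ T ≤ st) :
    omega A b lam T ≤
      (1 + rhoPlus A (S.card + 2 * st) / rhoMinus A (S.card + 2 * st)) *
        l2 (fun i => M * (x i - T i)) := by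
  set s := S.card + 2 * st with hs_def
  have hne := rayleighQuotients_nonempty_of_rhoMinus_pos hrho
  have hs : 1 ≤ s := one_le_of_rayleighQuotients_nonempty hne
  have hplus : 0 ≤ rhoPlus A s := hrho.le.trans (rhoMinus_le_rhoPlus hne)
  have hMpos : 0 < M := hrho.trans_le hM
  have hsparse : l0 (x - T) ≤ s := (l0_sub_le x T S).trans (by omega)
  have hstep : l2 (fun i => M * (x i - T i)) = M * l2 (x - T) := by
    rw [l2_const_mul, abs_of_pos hMpos]
    rfl
  have hκ : rhoPlus A s * l2 (x - T) ≤
      rhoPlus A s / rhoMinus A s * l2 (fun i => M * (x i - T i)) := by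
    calc rhoPlus A s * l2 (x - T)
        = rhoPlus A s / rhoMinus A s * (rhoMinus A s * l2 (x - T)) := by field_simp
      _ ≤ _ := hstep ▸ mul_le_mul_of_nonneg_left
          (mul_le_mul_of_nonneg_right hM (Real.sqrt_nonneg _)) (div_nonneg hplus hrho.le)
  refine (omega_le_linf (isSubgrad_of_isMin_psi hlam hMpos hT)).trans <| Real.iSup_le (fun i => ?_)
    (mul_nonneg (by positivity) (Real.sqrt_nonneg _))
  have hres : grad A b T i + lam * ((M * (x i - T i) - grad A b x i) / lam) =
      M * (x i - T i) - (Aᵀ.mulVec (A.mulVec (x - T))) i := by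
    rw [mul_div_cancel₀ _ hlam.ne', ← grad_sub_grad, Pi.sub_apply]
    ring
  calc |grad A b T i + lam * ((M * (x i - T i) - grad A b x i) / lam)|
      ≤ |M * (x i - T i)| + |(Aᵀ.mulVec (A.mulVec (x - T))) i| := hres ▸ abs_sub _ _
    _ ≤ l2 (fun i => M * (x i - T i)) + rhoPlus A s * l2 (x - T) :=
        add_le_add (abs_le_l2 (fun i => M * (x i - T i)) i)
          (abs_transpose_mulVec_mulVec_le_rhoPlus hs hsparse i)
    _ ≤ _ := by linarith

theorem stmt12 {m n : ℕ} (A : Matrix (Fin m) (Fin n) ℝ) (b : Fin m → ℝ)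
    (S : Finset (Fin n)) (lam : ℝ) (hlam : 0 < lam) (st : ℕ) (hst : 1 ≤ st)
    (hrho : 0 < rhoMinus A (S.card + 2 * st))
    (M : ℝ) (hM : rhoMinus A (S.card + 2 * st) ≤ M)
    (x : Fin n → ℝ) (hxsp : l0on Sᶜ x ≤ st)
    (T : Fin n → ℝ) (hT : ∀ u, psi A b lam M x T ≤ psi A b lam M x u)
    (hTsp : l0on Sᶜ T ≤ st) :
    omega A b lam T ≤
      (1 + rhoPlus A (S.card + 2 * st) / rhoMinus A (S.card + 2 * st)) *
        l2 (fun i => M * (x i - T i)) :=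
  stmt12_general A b S lam hlam st hrho M hM x hxsp T hT hTsp

end PGH
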